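/- Let φ ∈ C²((0,∞); ℝ) and F > 0 with φ''(2F) ≤ 0. Then the infimum of E_a''(y_F)[u,u] over all u ∈ 𝒰 with ‖u'‖_{ℓ²_ε} = 1 equals A_F − ε² μ_ε² φ''(2F), where μ_ε = 2 sin(πε/2)/ε. -/

import Mathlib

open Finset Real

noncomputable section

/-- The index set `{-N+1, ..., N}` of one period. -/
def idx (N : ℕ) : Finset ℤ := Finset.Icc (-(N : ℤ) + 1) (N : ℤ)

/-- The space 𝒰 of 2N-periodic displacements with zero mean. -/
def uSet (N : ℕ) : Set (ℤ → ℝ) :=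
  {u | (∀ ℓ : ℤ, u (ℓ + 2 * (N : ℤ)) = u ℓ) ∧ ∑ ℓ ∈ idx N, u ℓ = 0}

/-- Backward difference `v'_ℓ = ε⁻¹ (v_ℓ - v_{ℓ-1})`, with `ε = 1/N`. -/
def bD (N : ℕ) (v : ℤ → ℝ) (ℓ : ℤ) : ℝ := (N : ℝ) * (v ℓ - v (ℓ - 1))

/-- Centered second difference `v''_ℓ = ε⁻² (v_{ℓ+1} - 2 v_ℓ + v_{ℓ-1})`. -/
def cD2 (N : ℕ) (v : ℤ → ℝ) (ℓ : ℤ) : ℝ := (N : ℝ) ^ 2 * (v (ℓ + 1) - 2 * v ℓ + v (ℓ - 1))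

/-- Weighted ℓ²-norm. -/
def nl2 (N : ℕ) (v : ℤ → ℝ) : ℝ := Real.sqrt ((N : ℝ)⁻¹ * ∑ ℓ ∈ idx N, (v ℓ) ^ 2)

/-- Weighted ℓ¹-norm. -/
def nl1 (N : ℕ) (v : ℤ → ℝ) : ℝ := (N : ℝ)⁻¹ * ∑ ℓ ∈ idx N, |v ℓ|

/-- ℓ∞-norm over one period. -/
def nlinf (N : ℕ) (v : ℤ → ℝ) : ℝ := ⨆ ℓ : {ℓ : ℤ // ℓ ∈ idx N}, |v ℓ.1|

/-- Weighted ℓ²-inner product. -/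
def iprod (N : ℕ) (u v : ℤ → ℝ) : ℝ := (N : ℝ)⁻¹ * ∑ ℓ ∈ idx N, u ℓ * v ℓ

/-- The uniform deformation `(y_F)_ℓ = F ℓ ε`. -/
def yF (N : ℕ) (F : ℝ) : ℤ → ℝ := fun ℓ => F * (ℓ : ℝ) * (N : ℝ)⁻¹

/-- First variation `E'(y)[u]`. -/
def dE (E : (ℤ → ℝ) → ℝ) (y u : ℤ → ℝ) : ℝ := deriv (fun t : ℝ => E (y + t • u)) 0

/-- Second variation `E''(y)[u,v]`. -/
def d2E (E : (ℤ → ℝ) → ℝ) (y u v : ℤ → ℝ) : ℝ :=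
  deriv (fun s : ℝ => deriv (fun t : ℝ => E (y + s • u + t • v)) 0) 0

/-- The atomistic energy. -/
def Ea (N : ℕ) (φ : ℝ → ℝ) (y : ℤ → ℝ) : ℝ :=
  (N : ℝ)⁻¹ * ∑ ℓ ∈ idx N, (φ (bD N y ℓ) + φ (bD N y ℓ + bD N y (ℓ + 1)))

/-- The local QC (continuum) energy. -/
def Eqcl (N : ℕ) (φ : ℝ → ℝ) (y : ℤ → ℝ) : ℝ :=
  (N : ℝ)⁻¹ * ∑ ℓ ∈ idx N, (φ (bD N y ℓ) + φ (2 * bD N y ℓ))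

/-- The QNL atomistic region `{-K-1, ..., K+1}`. -/
def aQnl (K : ℕ) : Finset ℤ := Finset.Icc (-(K : ℤ) - 1) ((K : ℤ) + 1)

/-- The quasi-nonlocal QC energy. -/
def Eqnl (N K : ℕ) (φ : ℝ → ℝ) (y : ℤ → ℝ) : ℝ :=
  (N : ℝ)⁻¹ * ((∑ ℓ ∈ idx N, φ (bD N y ℓ))
    + (∑ ℓ ∈ aQnl K, φ (bD N y ℓ + bD N y (ℓ + 1)))
    + ∑ ℓ ∈ idx N \ aQnl K, (φ (2 * bD N y ℓ) + φ (2 * bD N y (ℓ + 1))) / 2)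

/-- The QCE atomistic region `{-K, ..., K}`. -/
def aQce (K : ℕ) : Finset ℤ := Finset.Icc (-(K : ℤ)) (K : ℤ)

/-- Atomistic energy contribution of atom ℓ. -/
def eAtom (N : ℕ) (φ : ℝ → ℝ) (y : ℤ → ℝ) (ℓ : ℤ) : ℝ :=
  (φ (bD N y ℓ) + φ (bD N y (ℓ + 1)) + φ (bD N y (ℓ - 1) + bD N y ℓ)
    + φ (bD N y (ℓ + 1) + bD N y (ℓ + 2))) / 2

/-- Continuum energy contribution of atom ℓ. -/
def eCont (N : ℕ) (φ : ℝ → ℝ) (y : ℤ → ℝ) (ℓ : ℤ) : ℝ :=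
  (φ (bD N y ℓ) + φ (bD N y (ℓ + 1)) + φ (2 * bD N y ℓ) + φ (2 * bD N y (ℓ + 1))) / 2

/-- The energy-based QC energy. -/
def Eqce (N K : ℕ) (φ : ℝ → ℝ) (y : ℤ → ℝ) : ℝ :=
  (N : ℝ)⁻¹ * ((∑ ℓ ∈ idx N \ aQce K, eCont N φ y ℓ) + ∑ ℓ ∈ aQce K, eAtom N φ y ℓ)

/-- The prescribed backward difference `ĝ'` of the ghost-force corrector. -/
def ghatD (K : ℕ) (ℓ : ℤ) : ℝ :=
  if ℓ = -(K : ℤ) - 1 ∨ ℓ = (K : ℤ) + 2 then -(1 / 2)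
  else if ℓ = -(K : ℤ) + 1 ∨ ℓ = (K : ℤ) then 1 / 2 else 0

/-- `μ_ε = 2 sin(π ε / 2) / ε` with `ε = 1/N`. -/
def muEps (N : ℕ) : ℝ := 2 * Real.sin (Real.pi * (N : ℝ)⁻¹ / 2) / (N : ℝ)⁻¹

/-- The `𝒰^{-1,∞}`-norm of a functional `T` on 𝒰. -/
def dualNorm (N : ℕ) (T : (ℤ → ℝ) → ℝ) : ℝ :=
  sSup {r : ℝ | ∃ v ∈ uSet N, nl1 N (bD N v) = 1 ∧ r = T v}


/-
Along the line `y_F + r u` the energy is `ε Σ_ℓ φ(F + r u'_ℓ) + φ(2F + r (u'_ℓ + u'_{ℓ+1}))`, so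
`E_a''(y_F)[u,u] = ε Σ_ℓ φ''(F) |u'_ℓ|² + φ''(2F) |u'_ℓ + u'_{ℓ+1}|²`. By periodicity and
`|a + b|² = 2|a|² + 2|b|² - |b - a|²` this equals `A_F ‖u'‖² - φ''(2F) ε Σ_ℓ |u'_{ℓ+1} - u'_ℓ|²`.
As `φ''(2F) ≤ 0`, everything reduces to the discrete Wirtinger inequality for the mean-zero
`2N`-periodic sequence `v = u'`: `ε Σ |v_{ℓ+1} - v_ℓ|² ≥ 4 sin²(π/2N) ‖v‖² = ε² μ_ε² ‖v‖²`, which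
Parseval's identity on `ZMod (2N)` gives since `|e^{2πik/2N} - 1|² = 4 sin²(πk/2N)`. Equality holds
for a multiple of `u_ℓ = sin(πℓ/N)`: from `u_{ℓ+1} + u_{ℓ-1} = 2 cos(π/N) u_ℓ` summation by parts
yields both the zero mean of `u` and equality in Wirtinger's inequality.
-/

lemma sin_sq_pi_div_le {m n : ℕ} (hm : 0 < m) (hmn : m < n) :
    sin (π / n) ^ 2 ≤ sin (π * m / n) ^ 2 := by
  have hn : (0 : ℝ) < n := by exact_mod_cast hm.trans hmn
  have h1 : (1 : ℝ) ≤ m := by exact_mod_cast hm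
  have h2 : (m : ℝ) + 1 ≤ n := by exact_mod_cast hmn
  have hπn : 0 < π / n := div_pos pi_pos hn
  have hlow : π / n ≤ π * m / n := div_le_div_of_nonneg_right (by nlinarith [pi_pos]) hn.le
  have hhalf : π / n ≤ π / 2 := div_le_div_of_nonneg_left pi_pos.le two_pos (by linarith)
  have hsin_nonneg : 0 ≤ sin (π / n) := sin_nonneg_of_nonneg_of_le_pi hπn.le (by linarith)
  gcongr
  rcases le_total (π * m / n) (π / 2) with h | h
  · exact sin_le_sin_of_le_of_le_pi_div_two (by linarith) h hlow
  · rw [← sin_pi_sub (π * m / n)]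
    refine sin_le_sin_of_le_of_le_pi_div_two (by linarith) (by linarith) ?_
    rw [le_sub_iff_add_le, ← add_div, div_le_iff₀ hn]
    nlinarith [pi_pos]

namespace ZMod

variable {n : ℕ} [NeZero n]

lemma dft_comp_add_one (Φ : ZMod n → ℂ) (k : ZMod n) :
    𝓕 (fun j ↦ Φ (j + 1)) k = stdAddChar k * 𝓕 Φ k := by
  simp only [dft_apply, smul_eq_mul, Finset.mul_sum]
  refine Fintype.sum_equiv (Equiv.addRight 1) _ _ fun j ↦ ?_
  simp only [Equiv.coe_addRight, ← mul_assoc, ← AddChar.map_add_eq_mul]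
  congr 2
  ring

lemma sum_norm_dft_sq (Φ : ZMod n → ℂ) :
    ∑ k, ‖𝓕 Φ k‖ ^ 2 = n * ∑ j, ‖Φ j‖ ^ 2 := by
  have inversion (j : ZMod n) : ∑ k, stdAddChar (j * k) * 𝓕 Φ k = n * Φ j := by
    simpa [dft_apply, mul_comm] using congrFun (dft_dft Φ) (-j)
  apply Complex.ofReal_injective
  push_cast
  simp_rw [← Complex.conj_mul']
  calc ∑ k, (starRingEnd ℂ) (𝓕 Φ k) * 𝓕 Φ k
      = ∑ k, ∑ j, (starRingEnd ℂ) (𝓕 Φ k) * (stdAddChar (-(j * k)) * Φ j) := by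
        refine Finset.sum_congr rfl fun k _ ↦ ?_
        rw [← Finset.mul_sum]
        congr 1
    _ = ∑ j, Φ j * (starRingEnd ℂ) (∑ k, stdAddChar (j * k) * 𝓕 Φ k) := by
        simp only [map_sum, map_mul, ← AddChar.map_neg_eq_conj, Finset.mul_sum]
        rw [Finset.sum_comm]
        refine Finset.sum_congr rfl fun j _ ↦ Finset.sum_congr rfl fun k _ ↦ ?_
        ring
    _ = n * ∑ j, (starRingEnd ℂ) (Φ j) * Φ j := by
        simp only [inversion, map_mul, map_natCast, Finset.mul_sum]
        refine Finset.sum_congr rfl fun j _ ↦ ?_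
        ring

lemma norm_stdAddChar_sub_one_sq (k : ZMod n) :
    ‖stdAddChar k - 1‖ ^ 2 = 4 * sin (π * k.val / n) ^ 2 := by
  rw [stdAddChar_apply, toCircle_apply,
    show 2 * π * Complex.I * k.val / n = Complex.I * ((2 * π * k.val / n : ℝ) : ℂ) by
      push_cast; ring,
    Complex.norm_exp_I_mul_ofReal_sub_one, Real.norm_eq_abs, sq_abs, mul_pow,
    show 2 * π * k.val / n / 2 = π * k.val / n by ring]
  norm_num

theorem four_mul_sin_sq_mul_sum_sq_le (v : ZMod n → ℝ) (hv : ∑ x, v x = 0) :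
    4 * sin (π / n) ^ 2 * ∑ x, v x ^ 2 ≤ ∑ x, (v (x + 1) - v x) ^ 2 := by
  have sum_sq (w : ZMod n → ℝ) : ∑ x, w x ^ 2 = ∑ x, ‖(w x : ℂ)‖ ^ 2 := by
    simp [Complex.norm_real, sq_abs]
  set Φ : ZMod n → ℂ := fun x ↦ v x
  have dft_diff (k : ZMod n) :
      𝓕 (fun x ↦ ((v (x + 1) - v x : ℝ) : ℂ)) k = (stdAddChar k - 1) * 𝓕 Φ k := by
    have : (fun x ↦ ((v (x + 1) - v x : ℝ) : ℂ)) = (fun x ↦ Φ (x + 1)) - Φ := by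
      ext x; simp [Φ]
    rw [this, map_sub, Pi.sub_apply, dft_comp_add_one, sub_mul, one_mul]
  have termwise (k : ZMod n) :
      4 * sin (π / n) ^ 2 * ‖𝓕 Φ k‖ ^ 2 ≤ ‖stdAddChar k - 1‖ ^ 2 * ‖𝓕 Φ k‖ ^ 2 := by
    rcases eq_or_ne k 0 with rfl | hk
    · simp [Φ, dft_apply_zero, ← Complex.ofReal_sum, hv]
    · have := sin_sq_pi_div_le (Nat.pos_of_ne_zero ((val_ne_zero k).mpr hk)) (val_lt k)
      rw [norm_stdAddChar_sub_one_sq]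
      gcongr
  have hn : (0 : ℝ) < n := by exact_mod_cast NeZero.pos n
  refine le_of_mul_le_mul_left ?_ hn
  calc (n : ℝ) * (4 * sin (π / n) ^ 2 * ∑ x, v x ^ 2)
      = ∑ k, 4 * sin (π / n) ^ 2 * ‖𝓕 Φ k‖ ^ 2 := by
        rw [← Finset.mul_sum, sum_norm_dft_sq, sum_sq]; ring
    _ ≤ ∑ k, ‖stdAddChar k - 1‖ ^ 2 * ‖𝓕 Φ k‖ ^ 2 := Finset.sum_le_sum fun k _ ↦ termwise k
    _ = n * ∑ x, (v (x + 1) - v x) ^ 2 := by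
        simp_rw [sum_sq (fun x ↦ v (x + 1) - v x), ← sum_norm_dft_sq, dft_diff, norm_mul,
          mul_pow]

end ZMod

section PeriodicSums

variable {M : Type*} {f : ℤ → M}

lemma Function.Periodic.apply_intCast_valMinAbs {n : ℕ} (hf : Function.Periodic f n) (ℓ : ℤ) :
    f (ℓ : ZMod n).valMinAbs = f ℓ := by
  obtain ⟨m, hm⟩ :=
    (ZMod.intCast_eq_intCast_iff_dvd_sub _ _ _).mp (ZMod.coe_valMinAbs (ℓ : ZMod n))
  calc f (ℓ : ZMod n).valMinAbs = f ((ℓ : ZMod n).valMinAbs + m * n) := (hf.int_mul m _).symm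
    _ = f ℓ := by congr 1; linarith

lemma Function.Periodic.apply_valMinAbs_add {n : ℕ} (hf : Function.Periodic f n) (x : ZMod n)
    (k : ℤ) : f (x + k : ZMod n).valMinAbs = f (x.valMinAbs + k) := by
  rw [← hf.apply_intCast_valMinAbs (x.valMinAbs + k)]
  push_cast [ZMod.coe_valMinAbs]
  rfl

variable {N : ℕ} [NeZero N]

-- `idx N = {-N+1, …, N}` is exactly the range of `ZMod.valMinAbs` on `ZMod (2 * N)`.
lemma sum_idx_eq_sum_zmod [AddCommMonoid M] (g : ZMod (2 * N) → M) :
    ∑ ℓ ∈ idx N, g ℓ = ∑ x, g x := by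
  refine Finset.sum_nbij' (fun ℓ ↦ (ℓ : ZMod (2 * N))) ZMod.valMinAbs (by simp) ?_ ?_ ?_
    (fun _ _ ↦ rfl)
  · intro x _
    have := x.valMinAbs_mem_Ioc
    simp only [Set.mem_Ioc, Nat.cast_mul, Nat.cast_ofNat] at this
    simp only [idx, Finset.mem_Icc]
    omega
  · intro ℓ hℓ
    simp only [idx, Finset.mem_Icc] at hℓ
    rw [ZMod.valMinAbs_spec]
    refine ⟨rfl, ?_⟩
    simp only [Set.mem_Ioc, Nat.cast_mul, Nat.cast_ofNat]
    omega
  · intro x _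
    exact ZMod.coe_valMinAbs x

lemma Function.Periodic.sum_idx_eq_sum_valMinAbs [AddCommMonoid M]
    (hf : Function.Periodic f (2 * N)) :
    ∑ ℓ ∈ idx N, f ℓ = ∑ x : ZMod (2 * N), f x.valMinAbs := by
  have hf' : Function.Periodic f ((2 * N : ℕ) : ℤ) := by exact_mod_cast hf
  rw [← sum_idx_eq_sum_zmod]
  exact Finset.sum_congr rfl fun ℓ _ ↦ (hf'.apply_intCast_valMinAbs ℓ).symm

lemma Function.Periodic.sum_idx_comp_add_one [AddCommMonoid M]
    (hf : Function.Periodic f (2 * N)) : ∑ ℓ ∈ idx N, f (ℓ + 1) = ∑ ℓ ∈ idx N, f ℓ := by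
  have hf' : Function.Periodic f ((2 * N : ℕ) : ℤ) := by exact_mod_cast hf
  rw [(hf.add_const 1).sum_idx_eq_sum_valMinAbs, hf.sum_idx_eq_sum_valMinAbs]
  refine Fintype.sum_equiv (Equiv.addRight 1) _ _ fun x ↦ ?_
  simpa using (hf'.apply_valMinAbs_add x 1).symm

theorem four_mul_sin_sq_mul_sum_idx_sq_le {v : ℤ → ℝ} (hv : Function.Periodic v (2 * N))
    (hmean : ∑ ℓ ∈ idx N, v ℓ = 0) :
    4 * sin (π / (2 * N)) ^ 2 * ∑ ℓ ∈ idx N, v ℓ ^ 2 ≤ ∑ ℓ ∈ idx N, (v (ℓ + 1) - v ℓ) ^ 2 := by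
  have hv' : Function.Periodic v ((2 * N : ℕ) : ℤ) := by exact_mod_cast hv
  have hsq : Function.Periodic (fun ℓ ↦ v ℓ ^ 2) (2 * N) := fun ℓ ↦ by simp only [hv ℓ]
  have hdiff : Function.Periodic (fun ℓ ↦ (v (ℓ + 1) - v ℓ) ^ 2) (2 * N) := fun ℓ ↦ by
    simp only [add_right_comm ℓ (2 * (N : ℤ)), hv ℓ, hv (ℓ + 1)]
  rw [hv.sum_idx_eq_sum_valMinAbs] at hmean
  rw [hsq.sum_idx_eq_sum_valMinAbs, hdiff.sum_idx_eq_sum_valMinAbs]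
  convert ZMod.four_mul_sin_sq_mul_sum_sq_le (fun x ↦ v x.valMinAbs) hmean using 3
  · push_cast; ring
  · simpa using (hv'.apply_valMinAbs_add _ 1).symm

end PeriodicSums

lemma periodic_bD {N : ℕ} {u : ℤ → ℝ} (hu : Function.Periodic u (2 * N)) :
    Function.Periodic (bD N u) (2 * N) := fun ℓ ↦ by
  simp only [bD, add_sub_right_comm ℓ, hu ℓ, hu (ℓ - 1)]

lemma bD_add_bD_of_add_eq {N : ℕ} {u : ℤ → ℝ} {κ : ℝ}
    (heig : ∀ ℓ, u (ℓ + 1) + u (ℓ - 1) = 2 * κ * u ℓ) (ℓ : ℤ) :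
    bD N u (ℓ + 1) + bD N u (ℓ - 1) = 2 * κ * bD N u ℓ := by
  have h := heig (ℓ - 1)
  simp only [sub_add_cancel] at h
  simp only [bD, add_sub_cancel_right]
  linear_combination (N : ℝ) * (heig ℓ - h)

section QuadraticSums

variable {N : ℕ} [NeZero N] {u v : ℤ → ℝ}

lemma Function.Periodic.sum_idx_bD (hu : Function.Periodic u (2 * N)) :
    ∑ ℓ ∈ idx N, bD N u ℓ = 0 := by
  have hshift := (hu.sub_const 1).sum_idx_comp_add_one (N := N)
  simp only [add_sub_cancel_right] at hshift
  simp only [bD, ← Finset.mul_sum, Finset.sum_sub_distrib, hshift, sub_self, mul_zero]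

lemma Function.Periodic.sum_idx_add_sq (hv : Function.Periodic v (2 * N)) :
    ∑ ℓ ∈ idx N, (v ℓ + v (ℓ + 1)) ^ 2
      = 4 * ∑ ℓ ∈ idx N, v ℓ ^ 2 - ∑ ℓ ∈ idx N, (v (ℓ + 1) - v ℓ) ^ 2 := by
  have hshift := (hv.comp fun x ↦ x ^ 2).sum_idx_comp_add_one (N := N)
  simp only [Function.comp_apply] at hshift
  calc ∑ ℓ ∈ idx N, (v ℓ + v (ℓ + 1)) ^ 2
      = ∑ ℓ ∈ idx N, (2 * v ℓ ^ 2 + 2 * v (ℓ + 1) ^ 2 - (v (ℓ + 1) - v ℓ) ^ 2) :=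
        Finset.sum_congr rfl fun ℓ _ ↦ by ring
    _ = _ := by
        rw [Finset.sum_sub_distrib, Finset.sum_add_distrib, ← Finset.mul_sum, ← Finset.mul_sum,
          hshift]
        ring

lemma Function.Periodic.sum_idx_eq_zero_of_add_eq (hv : Function.Periodic v (2 * N)) {κ : ℝ}
    (hκ : κ ≠ 1) (heig : ∀ ℓ, v (ℓ + 1) + v (ℓ - 1) = 2 * κ * v ℓ) :
    ∑ ℓ ∈ idx N, v ℓ = 0 := by
  have hnext := hv.sum_idx_comp_add_one (N := N)
  have hprev := (hv.sub_const 1).sum_idx_comp_add_one (N := N)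
  simp only [add_sub_cancel_right] at hprev
  have hsum := Finset.sum_congr rfl fun ℓ (_ : ℓ ∈ idx N) ↦ heig ℓ
  rw [Finset.sum_add_distrib, hnext, ← hprev, ← Finset.mul_sum] at hsum
  have h1 : (1 - κ) * ∑ ℓ ∈ idx N, v ℓ = 0 := by linarith
  exact (mul_eq_zero.mp h1).resolve_left (sub_ne_zero.mpr hκ.symm)

lemma Function.Periodic.sum_idx_sub_sq_of_add_eq (hv : Function.Periodic v (2 * N)) {κ : ℝ}
    (heig : ∀ ℓ, v (ℓ + 1) + v (ℓ - 1) = 2 * κ * v ℓ) :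
    ∑ ℓ ∈ idx N, (v (ℓ + 1) - v ℓ) ^ 2 = (2 - 2 * κ) * ∑ ℓ ∈ idx N, v ℓ ^ 2 := by
  have hsq := (hv.comp fun x ↦ x ^ 2).sum_idx_comp_add_one (N := N)
  have hprod : Function.Periodic (fun ℓ ↦ v (ℓ - 1) * v ℓ) (2 * N) := fun ℓ ↦ by
    simp only [sub_eq_add_neg, add_right_comm ℓ (2 * (N : ℤ)), hv ℓ, hv (ℓ + -1)]
  have hprod_shift := hprod.sum_idx_comp_add_one
  simp only [Function.comp_apply, add_sub_cancel_right] at hsq hprod_shift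
  have hcross : ∑ ℓ ∈ idx N, v ℓ * v (ℓ + 1) + ∑ ℓ ∈ idx N, v (ℓ - 1) * v ℓ
      = 2 * κ * ∑ ℓ ∈ idx N, v ℓ ^ 2 := by
    rw [Finset.mul_sum, ← Finset.sum_add_distrib]
    exact Finset.sum_congr rfl fun ℓ _ ↦ by linear_combination v ℓ * heig ℓ
  calc ∑ ℓ ∈ idx N, (v (ℓ + 1) - v ℓ) ^ 2
      = ∑ ℓ ∈ idx N, v (ℓ + 1) ^ 2 + ∑ ℓ ∈ idx N, v ℓ ^ 2
        - 2 * ∑ ℓ ∈ idx N, v ℓ * v (ℓ + 1) := by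
        rw [Finset.mul_sum, ← Finset.sum_add_distrib, ← Finset.sum_sub_distrib]
        exact Finset.sum_congr rfl fun ℓ _ ↦ by ring
    _ = _ := by rw [hsq]; linear_combination -hcross - hprod_shift

end QuadraticSums

lemma iteratedDeriv_comp_const_add_mul {𝕜 E : Type*} [NontriviallyNormedField 𝕜]
    [NormedAddCommGroup E] [NormedSpace 𝕜 E] (n : ℕ) (f : 𝕜 → E) (c a x : 𝕜) :
    iteratedDeriv n (fun r ↦ f (c + a * r)) x = a ^ n • iteratedDeriv n f (c + a * x) := by
  induction n generalizing f x with
  | zero => simp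
  | succ n ih =>
    have hderiv : deriv (fun r ↦ f (c + a * r)) = fun r ↦ a • deriv f (c + a * r) := by
      ext r
      rw [deriv_comp_mul_left a (fun y ↦ f (c + y)), deriv_comp_const_add]
    rw [iteratedDeriv_succ', hderiv, iteratedDeriv_fun_const_smul_field, ih, smul_smul,
      iteratedDeriv_succ', pow_succ']

lemma iteratedDeriv_two_eq {𝕜 E : Type*} [NontriviallyNormedField 𝕜] [NormedAddCommGroup E]
    [NormedSpace 𝕜 E] (f : 𝕜 → E) : iteratedDeriv 2 f = deriv (deriv f) := by
  simp [iteratedDeriv_eq_iterate]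

lemma ContDiffAt.comp_const_add_mul {f : ℝ → ℝ} {c : ℝ} (hf : ContDiffAt ℝ 2 f c) (a : ℝ) :
    ContDiffAt ℝ 2 (fun r ↦ f (c + a * r)) 0 :=
  (show c + a * 0 = c by simp) ▸ hf |>.comp 0
    (contDiffAt_const.add (contDiffAt_const.mul contDiffAt_id))

lemma d2E_self (E : (ℤ → ℝ) → ℝ) (y u : ℤ → ℝ) :
    d2E E y u u = iteratedDeriv 2 (fun r : ℝ ↦ E (y + r • u)) 0 := by
  rw [iteratedDeriv_two_eq, d2E]
  congr 1
  ext s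
  simp_rw [add_assoc, ← add_smul]
  rw [deriv_comp_const_add (fun r ↦ E (y + r • u)), add_zero]

lemma nl2_eq_one_iff {N : ℕ} {v : ℤ → ℝ} :
    nl2 N v = 1 ↔ (N : ℝ)⁻¹ * ∑ ℓ ∈ idx N, v ℓ ^ 2 = 1 :=
  Real.sqrt_eq_one

section Energy

variable {N : ℕ} [NeZero N] {φ : ℝ → ℝ} {F : ℝ} {u : ℤ → ℝ}

lemma bD_yF_add_smul (F r : ℝ) (u : ℤ → ℝ) (ℓ : ℤ) :
    bD N (yF N F + r • u) ℓ = F + bD N u ℓ * r := by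
  have hN : (N : ℝ) ≠ 0 := NeZero.ne _
  simp only [bD, yF, Pi.add_apply, Pi.smul_apply, smul_eq_mul]
  push_cast
  field_simp
  ring

lemma Ea_yF_add_smul (φ : ℝ → ℝ) (F r : ℝ) (u : ℤ → ℝ) :
    Ea N φ (yF N F + r • u) = (N : ℝ)⁻¹ * ∑ ℓ ∈ idx N,
      (φ (F + bD N u ℓ * r) + φ (2 * F + (bD N u ℓ + bD N u (ℓ + 1)) * r)) := by
  simp only [Ea, bD_yF_add_smul]
  congr 1
  refine Finset.sum_congr rfl fun ℓ _ ↦ ?_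
  ring_nf

lemma d2E_Ea_yF (hφ : ContDiffOn ℝ 2 φ (Set.Ioi 0)) (hF : 0 < F) (u : ℤ → ℝ) :
    d2E (Ea N φ) (yF N F) u u = (N : ℝ)⁻¹ * ∑ ℓ ∈ idx N,
      (deriv (deriv φ) F * bD N u ℓ ^ 2
        + deriv (deriv φ) (2 * F) * (bD N u ℓ + bD N u (ℓ + 1)) ^ 2) := by
  have hφ_at {c : ℝ} (hc : 0 < c) : ContDiffAt ℝ 2 φ c := hφ.contDiffAt (Ioi_mem_nhds hc)
  have h2F : (0 : ℝ) < 2 * F := by positivity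
  simp_rw [d2E_self, Ea_yF_add_smul, iteratedDeriv_const_mul_field]
  rw [iteratedDeriv_fun_sum fun ℓ _ ↦
    ((hφ_at hF).comp_const_add_mul _).add ((hφ_at h2F).comp_const_add_mul _)]
  congr 1
  refine Finset.sum_congr rfl fun ℓ _ ↦ ?_
  rw [iteratedDeriv_fun_add ((hφ_at hF).comp_const_add_mul _)
      ((hφ_at h2F).comp_const_add_mul _),
    iteratedDeriv_comp_const_add_mul, iteratedDeriv_comp_const_add_mul, iteratedDeriv_two_eq]
  simp only [mul_zero, add_zero, smul_eq_mul]
  ring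

lemma d2E_Ea_yF_of_nl2_eq_one (hφ : ContDiffOn ℝ 2 φ (Set.Ioi 0)) (hF : 0 < F)
    (hu : Function.Periodic u (2 * N)) (hn : nl2 N (bD N u) = 1) :
    d2E (Ea N φ) (yF N F) u u = deriv (deriv φ) F + 4 * deriv (deriv φ) (2 * F)
      - deriv (deriv φ) (2 * F) * ((N : ℝ)⁻¹ * ∑ ℓ ∈ idx N, (bD N u (ℓ + 1) - bD N u ℓ) ^ 2) := by
  rw [nl2_eq_one_iff] at hn
  rw [d2E_Ea_yF hφ hF, Finset.sum_add_distrib, ← Finset.mul_sum, ← Finset.mul_sum,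
    (periodic_bD hu).sum_idx_add_sq]
  linear_combination (deriv (deriv φ) F + 4 * deriv (deriv φ) (2 * F)) * hn

lemma four_mul_sin_sq_le_of_mem_uSet (hu : u ∈ uSet N) (hn : nl2 N (bD N u) = 1) :
    4 * sin (π / (2 * N)) ^ 2
      ≤ (N : ℝ)⁻¹ * ∑ ℓ ∈ idx N, (bD N u (ℓ + 1) - bD N u ℓ) ^ 2 := by
  have hper : Function.Periodic u (2 * N) := hu.1
  have hwirt := four_mul_sin_sq_mul_sum_idx_sq_le (periodic_bD hper) hper.sum_idx_bD
  rw [nl2_eq_one_iff] at hn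
  calc 4 * sin (π / (2 * N)) ^ 2
      = 4 * sin (π / (2 * N)) ^ 2 * ((N : ℝ)⁻¹ * ∑ ℓ ∈ idx N, bD N u ℓ ^ 2) := by
        rw [hn, mul_one]
    _ = (N : ℝ)⁻¹ * (4 * sin (π / (2 * N)) ^ 2 * ∑ ℓ ∈ idx N, bD N u ℓ ^ 2) := by ring
    _ ≤ _ := by gcongr

lemma inv_mul_sum_sub_sq_of_add_eq (hu : Function.Periodic u (2 * N)) {κ : ℝ}
    (heig : ∀ ℓ, u (ℓ + 1) + u (ℓ - 1) = 2 * κ * u ℓ) (hn : nl2 N (bD N u) = 1) :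
    (N : ℝ)⁻¹ * ∑ ℓ ∈ idx N, (bD N u (ℓ + 1) - bD N u ℓ) ^ 2 = 2 - 2 * κ := by
  rw [nl2_eq_one_iff] at hn
  rw [(periodic_bD hu).sum_idx_sub_sq_of_add_eq (bD_add_bD_of_add_eq heig)]
  linear_combination (2 - 2 * κ) * hn

end Energy

lemma two_sub_two_mul_cos_two_mul (x : ℝ) : 2 - 2 * cos (2 * x) = 4 * sin x ^ 2 := by
  rw [cos_two_mul, sin_sq]; ring

lemma inv_sq_mul_muEps_sq (N : ℕ) [NeZero N] :
    (N : ℝ)⁻¹ ^ 2 * muEps N ^ 2 = 4 * sin (π / (2 * N)) ^ 2 := by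
  have hN : (N : ℝ) ≠ 0 := NeZero.ne _
  rw [muEps, show π * (N : ℝ)⁻¹ / 2 = π / (2 * N) by ring]
  field_simp
  ring

lemma exists_periodic_add_eq_cos_mul (N : ℕ) [NeZero N] (hN : 2 ≤ N) :
    ∃ u : ℤ → ℝ, Function.Periodic u (2 * N)
      ∧ (∀ ℓ, u (ℓ + 1) + u (ℓ - 1) = 2 * cos (π / N) * u ℓ) ∧ nl2 N (bD N u) = 1 := by
  have hNpos : (0 : ℝ) < N := by positivity
  have hθ : 0 < π / N := by positivity
  have hθπ : π / N < π := div_lt_self pi_pos (by exact_mod_cast hN)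
  set w : ℤ → ℝ := fun ℓ ↦ sin (π / N * ℓ)
  have hw_per : Function.Periodic w (2 * N) := fun ℓ ↦ by
    simp only [w, Int.cast_add, Int.cast_mul, Int.cast_ofNat, Int.cast_natCast]
    rw [show π / N * (ℓ + 2 * N) = π / N * ℓ + 2 * π by field_simp, sin_add_two_pi]
  have hw_eig (ℓ : ℤ) : w (ℓ + 1) + w (ℓ - 1) = 2 * cos (π / N) * w ℓ := by
    simp only [w, Int.cast_add, Int.cast_sub, Int.cast_one, mul_add, mul_sub, mul_one, sin_add,
      sin_sub]
    ring
  set S := (N : ℝ)⁻¹ * ∑ ℓ ∈ idx N, bD N w ℓ ^ 2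
  have hS : 0 < S := by
    have h1 : (1 : ℤ) ∈ idx N := by simp only [idx, Finset.mem_Icc]; omega
    have hw1 : 0 < bD N w 1 := by
      simpa [bD, w] using mul_pos hNpos (sin_pos_of_pos_of_lt_pi hθ hθπ)
    exact mul_pos (by positivity) ((pow_pos hw1 2).trans_le
      (Finset.single_le_sum (fun ℓ _ ↦ sq_nonneg (bD N w ℓ)) h1))
  refine ⟨fun ℓ ↦ (√S)⁻¹ * w ℓ, fun ℓ ↦ by simp only [hw_per ℓ],
    fun ℓ ↦ by linear_combination (√S)⁻¹ * hw_eig ℓ, ?_⟩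
  have hbD (ℓ : ℤ) : bD N (fun ℓ ↦ (√S)⁻¹ * w ℓ) ℓ = (√S)⁻¹ * bD N w ℓ := by
    simp only [bD]; ring
  rw [nl2_eq_one_iff]
  simp_rw [hbD, mul_pow, ← Finset.mul_sum, inv_pow, sq_sqrt hS.le, mul_left_comm _ (S⁻¹)]
  exact inv_mul_cancel₀ hS.ne'

lemma exists_mem_uSet_inv_mul_sum_sub_sq_eq (N : ℕ) [NeZero N] (hN : 2 ≤ N) :
    ∃ u ∈ uSet N, nl2 N (bD N u) = 1
      ∧ (N : ℝ)⁻¹ * ∑ ℓ ∈ idx N, (bD N u (ℓ + 1) - bD N u ℓ) ^ 2 = 4 * sin (π / (2 * N)) ^ 2 := by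
  obtain ⟨u, hu, heig, hn⟩ := exists_periodic_add_eq_cos_mul N hN
  have hcos : cos (π / N) ≠ 1 := by
    have : (1 : ℝ) < N := by exact_mod_cast hN
    have hlt := cos_lt_cos_of_nonneg_of_le_pi le_rfl (div_lt_self pi_pos this).le
      (div_pos pi_pos (by linarith))
    rw [cos_zero] at hlt
    exact hlt.ne
  refine ⟨u, ⟨hu, hu.sum_idx_eq_zero_of_add_eq hcos heig⟩, hn, ?_⟩
  rw [inv_mul_sum_sub_sq_of_add_eq hu heig hn, ← two_sub_two_mul_cos_two_mul]
  congr 3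
  field_simp

theorem stmt4 (N : ℕ) (hN : 2 ≤ N) (φ : ℝ → ℝ)
    (hφ : ContDiffOn ℝ 2 φ (Set.Ioi 0)) (F : ℝ) (hF : 0 < F)
    (h2F : deriv (deriv φ) (2 * F) ≤ 0) :
    IsGLB {r : ℝ | ∃ u ∈ uSet N, nl2 N (bD N u) = 1 ∧ r = d2E (Ea N φ) (yF N F) u u}
      (deriv (deriv φ) F + 4 * deriv (deriv φ) (2 * F)
        - (N : ℝ)⁻¹ ^ 2 * (muEps N) ^ 2 * deriv (deriv φ) (2 * F)) := by
  have : NeZero N := ⟨by omega⟩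
  rw [inv_sq_mul_muEps_sq]
  obtain ⟨u₀, hu₀, hn₀, hmin⟩ := exists_mem_uSet_inv_mul_sum_sub_sq_eq N hN
  refine IsLeast.isGLB ⟨⟨u₀, hu₀, hn₀, ?_⟩, ?_⟩
  · rw [d2E_Ea_yF_of_nl2_eq_one hφ hF hu₀.1 hn₀, hmin]
    ring
  · rintro r ⟨u, hu, hn, rfl⟩
    rw [d2E_Ea_yF_of_nl2_eq_one hφ hF hu.1 hn]
    linarith [mul_le_mul_of_nonpos_left (four_mul_sin_sq_le_of_mem_uSet hu hn) h2F]
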